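/- arXiv:1609.02104 — 2 statements merged into one kernel-verified Lean document; each statement's English description precedes it below -/
import Mathlib

section
/- In the VCG auction with linear utility U(t, π) = −α_U t − β_U π (β_U > 0) and payment function ω_k(t) = π_k(t) + Δ/β_U where Δ = U_i − U*, the winning agent i's expected profit E[profit] = Σ_k p_k (ω_k(t̂_k) − c_k) satisfies: (1) if U_i > U* > U_i^C then E[profit] < 0; (2) if U_i^C > U* > U_i then E[profit] > 0. -/
/-! Multiplying the expected profit by `β` turns it into `U_i^C - U_i + Δ = U_i^C - U*`: the
constant shift `Δ / β` of every price contributes `Δ` because the probabilities sum to one.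
Hence the profit has the sign of `U_i^C - U*`, whatever the bid utility `U_i` is. -/

theorem expected_profit_eq {ι K : Type*} [Fintype ι] [Field K] (p t π c : ι → K) (α β Δ : K)
    (hβ : β ≠ 0) (hp : ∑ k, p k = 1) :
    ∑ k, p k * ((π k + Δ / β) - c k) =
      (∑ k, p k * (-α * t k - β * c k) - ∑ k, p k * (-α * t k - β * π k) + Δ) / β := by
  calc ∑ k, p k * ((π k + Δ / β) - c k)
      = ∑ k, (p k * (-α * t k - β * c k) - p k * (-α * t k - β * π k) + Δ * p k) / β := by
        refine Finset.sum_congr rfl fun k _ => ?_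
        field_simp
        ring
    _ = _ := by
        rw [← Finset.sum_div, Finset.sum_add_distrib, Finset.sum_sub_distrib, ← Finset.mul_sum,
          hp, mul_one]

theorem stmt5_general {n : ℕ} (p th π c : Fin n → ℝ) (αU βU Ustar : ℝ)
    (hβU : 0 < βU) (hsum : ∑ k, p k = 1)
    (Ui UiC Δ Eprofit : ℝ)
    (hUi : Ui = ∑ k, p k * (-αU * th k - βU * π k))
    (hUiC : UiC = ∑ k, p k * (-αU * th k - βU * c k))
    (hΔ : Δ = Ui - Ustar)
    (hE : Eprofit = ∑ k, p k * ((π k + Δ / βU) - c k)) :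
    (Ui > Ustar → Ustar > UiC → Eprofit < 0) ∧
    (UiC > Ustar → Ustar > Ui → Eprofit > 0) := by
  have hprofit : Eprofit = (UiC - Ustar) / βU := by
    rw [hE, expected_profit_eq p th π c αU βU Δ hβU.ne' hsum, ← hUi, ← hUiC, hΔ]
    ring
  rw [hprofit]
  exact ⟨fun _ hlow => div_neg_of_neg_of_pos (sub_neg.mpr hlow) hβU,
    fun hhigh _ => div_pos (sub_pos.mpr hhigh) hβU⟩

/-- Sign of the VCG winner's expected profit relative to the second-best utility. -/
theorem stmt5 {n : ℕ} (p th π c : Fin n → ℝ) (αU βU Ustar : ℝ)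
    (hβU : 0 < βU) (hp : ∀ k, 0 ≤ p k) (hsum : ∑ k, p k = 1)
    (Ui UiC Δ Eprofit : ℝ)
    (hUi : Ui = ∑ k, p k * (-αU * th k - βU * π k))
    (hUiC : UiC = ∑ k, p k * (-αU * th k - βU * c k))
    (hΔ : Δ = Ui - Ustar)
    (hE : Eprofit = ∑ k, p k * ((π k + Δ / βU) - c k)) :
    (Ui > Ustar → Ustar > UiC → Eprofit < 0) ∧
    (UiC > Ustar → Ustar > Ui → Eprofit > 0) :=
  stmt5_general p th π c αU βU Ustar hβU hsum Ui UiC Δ Eprofit hUi hUiC hΔ hE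
end

section
/- Asynchronous Bertrand dynamics converge: with f₁, f₂ affine, a₁a₂ ∈ [0,1), define on ℝ² the maps F₁(μ₁,μ₂) = (f₁(μ₂), μ₂), F₂(μ₁,μ₂) = (μ₁, f₂(μ₁)), F₃(μ₁,μ₂) = (f₁(μ₂), f₂(μ₁)). Suppose (G_x)_{x≥1} is a sequence with each G_x ∈ {F₁, F₂, F₃} such that both Σ_x 1{G_x ≠ F₁} and Σ_x 1{G_x ≠ F₂} diverge (each agent updates infinitely often). Then G_x ∘ ⋯ ∘ G₁(μ₁,₀, μ₂,₀) → (μ₁*, μ₂*) for any initial point, where (μ₁*, μ₂*) is the unique common fixed point of F₁, F₂, F₃. -/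
/-!
Measure the distance to the equilibrium in the weighted sup-norm
`max |μ₁ - μ₁*| (w * |μ₂ - μ₂*|)`, with the weight `w` chosen in `(|a₁|, 1 / |a₂|)`; this is
possible exactly because `|a₁ a₂| < 1`. An update of either agent then replaces its coordinate
by at most `ρ < 1` times the current norm of the other one, and a coordinate that is not updated
stays put. Hence the norm is nonincreasing, and once both agents have updated after time `n`
it is at most `ρ` times its value at `n`. Its limit `L` therefore satisfies `L ≤ ρ L`, so `L = 0`.
-/

open Filter Topology

lemma exists_lt_and_mul_lt_one {p q : ℝ} (hq : 0 ≤ q) (h : p * q < 1) :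
    ∃ w, p < w ∧ w * q < 1 := by
  refine ⟨p + (1 - p * q) / (2 * (q + 1)), ?_, ?_⟩
  · have : 0 < (1 - p * q) / (2 * (q + 1)) := by apply div_pos <;> linarith
    linarith
  · have : (1 - p * q) / (2 * (q + 1)) * q < 1 - p * q := by
      rw [div_mul_eq_mul_div, div_lt_iff₀ (by linarith)]
      nlinarith
    linarith

section AsyncContraction

variable {u v M : ℕ → ℝ} {S : Set ℕ} {ρ : ℝ}

lemma le_mul_of_mem_of_lt (hρ : 0 ≤ ρ) (hM : Antitone M) (hvM : ∀ n, v n ≤ M n)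
    (hupd : ∀ n ∈ S, u (n + 1) ≤ ρ * v n) (hkeep : ∀ n ∉ S, u (n + 1) = u n)
    {n m : ℕ} (hn : n ∈ S) (hnm : n < m) : u m ≤ ρ * M n := by
  induction m, Nat.succ_le_of_lt hnm using Nat.le_induction with
  | base => exact (hupd n hn).trans (mul_le_mul_of_nonneg_left (hvM n) hρ)
  | succ k hk ih =>
    by_cases hkS : k ∈ S
    · calc u (k + 1) ≤ ρ * v k := hupd k hkS
        _ ≤ ρ * M n := mul_le_mul_of_nonneg_left ((hvM k).trans (hM (by omega))) hρ
    · rw [hkeep k hkS]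
      exact ih (by omega)

lemma succ_le_max_of_step (hρ : ρ ≤ 1) (hv : ∀ n, 0 ≤ v n)
    (hupd : ∀ n ∈ S, u (n + 1) ≤ ρ * v n) (hkeep : ∀ n ∉ S, u (n + 1) = u n) (n : ℕ) :
    u (n + 1) ≤ max (u n) (v n) := by
  by_cases hnS : n ∈ S
  · have : ρ * v n ≤ v n := mul_le_of_le_one_left (hv n) hρ
    exact le_max_of_le_right ((hupd n hnS).trans this)
  · exact (hkeep n hnS).le.trans (le_max_left _ _)

variable {T : Set ℕ}

theorem tendsto_zero_of_async_contraction (hρ₀ : 0 ≤ ρ) (hρ₁ : ρ < 1)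
    (hu : ∀ n, 0 ≤ u n) (hv : ∀ n, 0 ≤ v n) (hS : S.Infinite) (hT : T.Infinite)
    (hupdu : ∀ n ∈ S, u (n + 1) ≤ ρ * v n) (hkeepu : ∀ n ∉ S, u (n + 1) = u n)
    (hupdv : ∀ n ∈ T, v (n + 1) ≤ ρ * u n) (hkeepv : ∀ n ∉ T, v (n + 1) = v n) :
    Tendsto u atTop (𝓝 0) ∧ Tendsto v atTop (𝓝 0) := by
  set M := fun n => max (u n) (v n)
  have hM : Antitone M := antitone_nat_of_succ_le fun n =>
    max_le (succ_le_max_of_step hρ₁.le hv hupdu hkeepu n)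
      ((succ_le_max_of_step hρ₁.le hu hupdv hkeepv n).trans_eq (max_comm _ _))
  have hM₀ : ∀ n, 0 ≤ M n := fun n => (hu n).trans (le_max_left _ _)
  have hcontract : ∀ n, ∃ m, M m ≤ ρ * M n := by
    intro n
    obtain ⟨s, hs, hns⟩ := hS.exists_gt n
    obtain ⟨t, ht, hnt⟩ := hT.exists_gt n
    refine ⟨max s t + 1, max_le ?_ ?_⟩
    · calc u (max s t + 1) ≤ ρ * M s :=
            le_mul_of_mem_of_lt hρ₀ hM (fun _ => le_max_right _ _) hupdu hkeepu hs (by omega)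
        _ ≤ ρ * M n := mul_le_mul_of_nonneg_left (hM hns.le) hρ₀
    · calc v (max s t + 1) ≤ ρ * M t :=
            le_mul_of_mem_of_lt hρ₀ hM (fun _ => le_max_left _ _) hupdv hkeepv ht (by omega)
        _ ≤ ρ * M n := mul_le_mul_of_nonneg_left (hM hnt.le) hρ₀
  have hbdd : BddBelow (Set.range M) := ⟨0, by rintro _ ⟨n, rfl⟩; exact hM₀ n⟩
  have hlim := tendsto_atTop_ciInf hM hbdd
  have hL₀ : 0 ≤ ⨅ n, M n := le_ciInf hM₀
  have hLρ : ⨅ n, M n ≤ ρ * ⨅ n, M n := ge_of_tendsto' (hlim.const_mul ρ) fun n =>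
    let ⟨m, hm⟩ := hcontract n
    (ciInf_le hbdd m).trans hm
  have hL : ⨅ n, M n = 0 := by nlinarith
  rw [hL] at hlim
  exact ⟨squeeze_zero hu (fun n => le_max_left _ _) hlim,
    squeeze_zero hv (fun n => le_max_right _ _) hlim⟩

end AsyncContraction

theorem tendsto_zero_of_async_linear {a₁ a₂ : ℝ} (ha : |a₁ * a₂| < 1) {e d : ℕ → ℝ}
    {S T : Set ℕ} (hS : S.Infinite) (hT : T.Infinite)
    (hupde : ∀ n ∈ S, e (n + 1) = a₁ * d n) (hkeepe : ∀ n ∉ S, e (n + 1) = e n)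
    (hupdd : ∀ n ∈ T, d (n + 1) = a₂ * e n) (hkeepd : ∀ n ∉ T, d (n + 1) = d n) :
    Tendsto e atTop (𝓝 0) ∧ Tendsto d atTop (𝓝 0) := by
  obtain ⟨w, hw₁, hw₂⟩ := exists_lt_and_mul_lt_one (abs_nonneg a₂)
    (by rwa [← abs_mul] : |a₁| * |a₂| < 1)
  have hw : 0 < w := (abs_nonneg a₁).trans_lt hw₁
  set ρ := max (|a₁| / w) (w * |a₂|)
  have hρ₁ : ρ < 1 := max_lt ((div_lt_one hw).mpr hw₁) hw₂
  obtain ⟨hu, hv⟩ := tendsto_zero_of_async_contraction (u := fun n => |e n|)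
    (v := fun n => w * |d n|) (ρ := ρ) ((div_nonneg (abs_nonneg _) hw.le).trans (le_max_left _ _))
    hρ₁ (fun n => abs_nonneg _) (fun n => by positivity) hS hT
    (fun n hn => by
      calc |e (n + 1)| = |a₁| / w * (w * |d n|) := by rw [hupde n hn, abs_mul]; field_simp
        _ ≤ ρ * (w * |d n|) := by gcongr; exact le_max_left _ _)
    (fun n hn => by simp only [hkeepe n hn])
    (fun n hn => by
      calc w * |d (n + 1)| = w * |a₂| * |e n| := by rw [hupdd n hn, abs_mul, mul_assoc]
        _ ≤ ρ * |e n| := by gcongr; exact le_max_right _ _)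
    (fun n hn => by simp only [hkeepd n hn])
  refine ⟨(tendsto_zero_iff_abs_tendsto_zero e).mpr hu, (tendsto_zero_iff_abs_tendsto_zero d).mpr ?_⟩
  simpa [Function.comp_def, hw.ne'] using hv.const_mul w⁻¹

open Filter in
theorem stmt12_general (a₁ a₂ b₁ b₂ : ℝ) (h0 : 0 ≤ a₁ * a₂) (h1 : a₁ * a₂ < 1)
    (f₁ f₂ : ℝ → ℝ)
    (hf₁ : ∀ z, f₁ z = a₁ * z + b₁) (hf₂ : ∀ z, f₂ z = a₂ * z + b₂)
    (μ₁star μ₂star : ℝ) (hfix₁ : μ₁star = f₁ μ₂star) (hfix₂ : μ₂star = f₂ μ₁star)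
    (F₁ F₂ F₃ : ℝ × ℝ → ℝ × ℝ)
    (hF₁ : ∀ μ, F₁ μ = (f₁ μ.2, μ.2))
    (hF₂ : ∀ μ, F₂ μ = (μ.1, f₂ μ.1))
    (hF₃ : ∀ μ, F₃ μ = (f₁ μ.2, f₂ μ.1))
    (G : ℕ → (ℝ × ℝ → ℝ × ℝ))
    (hG : ∀ x, G x = F₁ ∨ G x = F₂ ∨ G x = F₃)
    (hinf₁ : {x : ℕ | G x ≠ F₁}.Infinite)
    (hinf₂ : {x : ℕ | G x ≠ F₂}.Infinite)
    (orbit : ℕ → ℝ × ℝ)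
    (horbit : ∀ x, orbit (x + 1) = G x (orbit x)) :
    Tendsto orbit atTop (nhds (μ₁star, μ₂star)) := by
  have hf₁' : ∀ z, f₁ z - μ₁star = a₁ * (z - μ₂star) := fun z => by
    rw [hfix₁, hf₁, hf₁]; ring
  have hf₂' : ∀ z, f₂ z - μ₂star = a₂ * (z - μ₁star) := fun z => by
    rw [hfix₂, hf₂, hf₂]; ring
  have h := tendsto_zero_of_async_linear (abs_lt.mpr ⟨by linarith, h1⟩)
    (e := fun n => (orbit n).1 - μ₁star) (d := fun n => (orbit n).2 - μ₂star) hinf₂ hinf₁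
    (fun n hn => by
      rcases hG n with h | h | h
      · simp only [horbit, h, hF₁, hf₁']
      · exact absurd h hn
      · simp only [horbit, h, hF₃, hf₁'])
    (fun n hn => by simp only [horbit, not_not.mp hn, hF₂])
    (fun n hn => by
      rcases hG n with h | h | h
      · exact absurd h hn
      · simp only [horbit, h, hF₂, hf₂']
      · simp only [horbit, h, hF₃, hf₂'])
    (fun n hn => by simp only [horbit, not_not.mp hn, hF₁])
  rw [Prod.tendsto_iff]
  exact ⟨tendsto_sub_nhds_zero_iff.mp h.1, tendsto_sub_nhds_zero_iff.mp h.2⟩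

open Filter in
/-- Asynchronous Bertrand price dynamics converge when both agents update infinitely often. -/
theorem stmt12 (a₁ a₂ b₁ b₂ : ℝ) (h0 : 0 ≤ a₁ * a₂) (h1 : a₁ * a₂ < 1)
    (f₁ f₂ : ℝ → ℝ)
    (hf₁ : ∀ z, f₁ z = a₁ * z + b₁) (hf₂ : ∀ z, f₂ z = a₂ * z + b₂)
    (μ₁star μ₂star : ℝ) (hfix₁ : μ₁star = f₁ μ₂star) (hfix₂ : μ₂star = f₂ μ₁star)
    (F₁ F₂ F₃ : ℝ × ℝ → ℝ × ℝ)
    (hF₁ : ∀ μ, F₁ μ = (f₁ μ.2, μ.2))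
    (hF₂ : ∀ μ, F₂ μ = (μ.1, f₂ μ.1))
    (hF₃ : ∀ μ, F₃ μ = (f₁ μ.2, f₂ μ.1))
    (G : ℕ → (ℝ × ℝ → ℝ × ℝ))
    (hG : ∀ x, G x = F₁ ∨ G x = F₂ ∨ G x = F₃)
    (hinf₁ : {x : ℕ | G x ≠ F₁}.Infinite)
    (hinf₂ : {x : ℕ | G x ≠ F₂}.Infinite)
    (μ₀ : ℝ × ℝ) (orbit : ℕ → ℝ × ℝ)
    (horbit0 : orbit 0 = μ₀)
    (horbit : ∀ x, orbit (x + 1) = G x (orbit x)) :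
    Tendsto orbit atTop (nhds (μ₁star, μ₂star)) :=
  stmt12_general a₁ a₂ b₁ b₂ h0 h1 f₁ f₂ hf₁ hf₂ μ₁star μ₂star hfix₁ hfix₂ F₁ F₂ F₃ hF₁ hF₂ hF₃ G hG
    hinf₁ hinf₂ orbit horbit
end
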